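/- For every integer n ≥ 1, σ₂(n) = Σ_{α ⊢ n} c(α)·∏_i P₂(i)^{α_i}, where the sum runs over all partitions α of n, α_i denotes the number of parts of α equal to i, and c is the integer-valued function on partitions defined by the recursion: c(α) = n if α = (n) is the partition with a single part of size n, and c(α) = −Σ_{i : α_i ≠ 0} c(α̂^i) otherwise, where α̂^i denotes the partition of n−i obtained from α by removing one part of size i. -/

import Mathlib

open Finset

/-- A plane partition of `n`: a finitely supported map `ℕ × ℕ → ℕ`, weakly decreasing
in both directions, whose entries sum to `n`. -/
def IsPlanePartition (n : ℕ) (π : ℕ × ℕ → ℕ) : Prop :=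
  (Function.support π).Finite ∧
  (∀ i j, π (i + 1, j) ≤ π (i, j)) ∧
  (∀ i j, π (i, j + 1) ≤ π (i, j)) ∧
  ∑ᶠ p : ℕ × ℕ, π p = n

/-- `P₂ n` is the number of plane partitions of `n`. -/
noncomputable def P2 (n : ℕ) : ℕ := Nat.card {π : ℕ × ℕ → ℕ // IsPlanePartition n π}

/-- `σ₂ n`, the sum of the squares of the (positive) divisors of `n`. -/
def sigma2 (n : ℕ) : ℕ := ∑ d ∈ n.divisors, d ^ 2

/-- The partition `α̂ⁱ` of `n - i` obtained from a partition `α` of `n` by removing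
one part of size `i`. -/
def Nat.Partition.erasePart {n : ℕ} (α : n.Partition) (i : ℕ) (hi : i ∈ α.parts) :
    (n - i).Partition where
  parts := α.parts.erase i
  parts_pos h := α.parts_pos (Multiset.mem_of_mem_erase h)
  parts_sum := by
    have h2 : i + (α.parts.erase i).sum = n := by
      rw [← Multiset.sum_cons, Multiset.cons_erase hi, α.parts_sum]
    omega

/-!
Removing from a plane partition the path that starts at the top of its last nonzero column `j`
and runs down and to the left through the first descents, leaving column `0` in row `i`, and
recording the cell `(i, j)`, whose weight `i + j + 1` is the length of the path, gives a
bijection between plane partitions of `n` and multisets of cells of total weight `n` (a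
Hillman–Grassl type correspondence); the inverse re-inserts the paths in reverse order. As
exactly `d` cells have weight `d`, summing the total weights of these multisets gives
`n P₂(n) = Σ_{k=1}^{n} σ₂(k) P₂(n - k)`. Splitting off one part of each partition with at least
two parts shows that `L(n) = Σ_{α ⊢ n} c(α) ∏ P₂(αᵢ)` obeys the same recursion
`L(n) = n P₂(n) - Σ_{k=1}^{n-1} L(k) P₂(n - k)` as `σ₂`, so the two agree.
-/

namespace PlanePartition

def cellWeight (c : ℕ × ℕ) : ℕ := c.1 + c.2 + 1

def Decreasing (π : ℕ × ℕ → ℕ) : Prop :=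
  (∀ i j, π (i + 1, j) ≤ π (i, j)) ∧ ∀ i j, π (i, j + 1) ≤ π (i, j)

lemma isPlanePartition_iff {n : ℕ} {π : ℕ × ℕ → ℕ} :
    IsPlanePartition n π ↔
      (Function.support π).Finite ∧ Decreasing π ∧ ∑ᶠ p, π p = n := by
  simp only [IsPlanePartition, Decreasing, and_assoc]

variable {π : ℕ × ℕ → ℕ}

lemma Decreasing.antitone (hd : Decreasing π) : Antitone π := by
  rintro ⟨i, j⟩ ⟨i', j'⟩ ⟨hi, hj⟩
  exact (antitone_nat_of_succ_le (f := fun a => π (a, j')) (fun a => hd.1 a j') hi).trans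
    (antitone_nat_of_succ_le (f := fun b => π (i, b)) (fun b => hd.2 i b) hj)

lemma Decreasing.col (hd : Decreasing π) {i i' : ℕ} (j : ℕ) (h : i ≤ i') :
    π (i', j) ≤ π (i, j) :=
  hd.antitone (Prod.mk_le_mk.mpr ⟨h, le_rfl⟩)

lemma Decreasing.row (hd : Decreasing π) (i : ℕ) {j j' : ℕ} (h : j ≤ j') :
    π (i, j') ≤ π (i, j) :=
  hd.antitone (Prod.mk_le_mk.mpr ⟨le_rfl, h⟩)

lemma Decreasing.eq_zero (hd : Decreasing π) (h0 : π (0, 0) = 0) : π = 0 :=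
  funext fun p => Nat.eq_zero_of_le_zero <|
    h0 ▸ hd.antitone (Prod.mk_le_mk.mpr ⟨Nat.zero_le p.1, Nat.zero_le p.2⟩)

lemma exists_apply_eq_zero_of_not_le (hf : (Function.support π).Finite) :
    ∃ M : ℕ × ℕ, ∀ p, ¬ p ≤ M → π p = 0 := by
  obtain ⟨M, hM⟩ := hf.bddAbove
  exact ⟨M, fun p hp => Function.notMem_support.mp fun h => hp (hM h)⟩

lemma finsum_add_indicator (hf : (Function.support π).Finite) (S : Finset (ℕ × ℕ)) :
    ∑ᶠ p, (π p + if p ∈ S then 1 else 0) = ∑ᶠ p, π p + S.card := by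
  have hS : Function.support (fun p => if p ∈ S then 1 else 0) ⊆ S := fun p hp => by
    by_contra h
    simp_all
  rw [finsum_add_distrib hf (S.finite_toSet.subset hS), finsum_eq_sum_of_support_subset _ hS,
    sum_boole, filter_mem_eq_inter, inter_self, Nat.cast_id]

def columnIntervals (b : ℕ) (lo hi : ℕ → ℕ) : Finset (ℕ × ℕ) :=
  (range (b + 1)).biUnion fun j => Icc (lo j) (hi j) ×ˢ {j}

lemma mem_columnIntervals {b i j : ℕ} {lo hi : ℕ → ℕ} :
    (i, j) ∈ columnIntervals b lo hi ↔ j ≤ b ∧ lo j ≤ i ∧ i ≤ hi j := by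
  simp only [columnIntervals, mem_biUnion, mem_range, mem_product, mem_Icc, mem_singleton]
  constructor
  · rintro ⟨j, hj, hi, rfl⟩
    exact ⟨Nat.lt_succ_iff.mp hj, hi⟩
  · rintro ⟨hj, hi⟩
    exact ⟨j, Nat.lt_succ_of_le hj, hi, rfl⟩

lemma card_columnIntervals (b : ℕ) (lo hi : ℕ → ℕ) :
    (columnIntervals b lo hi).card = ∑ j ∈ range (b + 1), (hi j + 1 - lo j) := by
  rw [columnIntervals, card_biUnion]
  · simp
  · intro j _ j' _ hjj'
    simp only [Function.onFun, disjoint_left, mem_product, mem_singleton]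
    rintro p ⟨-, rfl⟩ ⟨-, h⟩
    exact hjj' h

lemma cellWeight_pos (c : ℕ × ℕ) : 0 < cellWeight c := Nat.succ_pos _

def totalWeight (T : Multiset (ℕ × ℕ)) : ℕ := (T.map cellWeight).sum

@[simp] lemma totalWeight_cons (c : ℕ × ℕ) (T : Multiset (ℕ × ℕ)) :
    totalWeight (c ::ₘ T) = cellWeight c + totalWeight T := by
  simp [totalWeight]

@[simp] lemma totalWeight_add (S T : Multiset (ℕ × ℕ)) :
    totalWeight (S + T) = totalWeight S + totalWeight T := by
  simp [totalWeight]

@[simp] lemma totalWeight_replicate (m : ℕ) (c : ℕ × ℕ) :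
    totalWeight (Multiset.replicate m c) = m * cellWeight c := by
  simp [totalWeight]

lemma cellWeight_le_totalWeight {T : Multiset (ℕ × ℕ)} {c : ℕ × ℕ} (hc : c ∈ T) :
    cellWeight c ≤ totalWeight T :=
  Multiset.le_sum_of_mem (Multiset.mem_map_of_mem cellWeight hc)

lemma card_le_totalWeight (T : Multiset (ℕ × ℕ)) : Multiset.card T ≤ totalWeight T := by
  induction T using Multiset.induction with
  | empty => simp
  | cons c T ih => simp only [Multiset.card_cons, totalWeight_cons, cellWeight]; omega

lemma totalWeight_eq_sum_count {s : Finset (ℕ × ℕ)} {T : Multiset (ℕ × ℕ)} (hT : ∀ c ∈ T, c ∈ s) :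
    totalWeight T = ∑ c ∈ s, T.count c * cellWeight c := by
  rw [totalWeight, Finset.sum_multiset_map_count]
  refine sum_subset (fun c hc => hT c (Multiset.mem_toFinset.mp hc)) fun c _ hc => ?_
  rw [Multiset.count_eq_zero_of_notMem (by simpa using hc), zero_smul]

noncomputable def lastCol (π : ℕ × ℕ → ℕ) : ℕ := sInf {j | π (0, j + 1) = 0}

noncomputable def descentRow (π : ℕ × ℕ → ℕ) (j r : ℕ) : ℕ :=
  sInf {i | r ≤ i ∧ π (i + 1, j) < π (i, j)}

/-- The removed path starts at the top of the last nonzero column and runs down each column to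
its first descent, then continues one column to the left in the same row. It enters column
`lastCol π - k` in row `pathRow π k` and leaves column `0` in row `pathRow π (lastCol π + 1)`. -/
noncomputable def pathRow (π : ℕ × ℕ → ℕ) : ℕ → ℕ
  | 0 => 0
  | k + 1 => descentRow π (lastCol π - k) (pathRow π k)

noncomputable def pathFinset (π : ℕ × ℕ → ℕ) : Finset (ℕ × ℕ) :=
  columnIntervals (lastCol π) (fun j => pathRow π (lastCol π - j))
    (fun j => pathRow π (lastCol π + 1 - j))

noncomputable def removePath (π : ℕ × ℕ → ℕ) (p : ℕ × ℕ) : ℕ :=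
  if p ∈ pathFinset π then π p - 1 else π p

/-- The cell recording the removed path; its weight is the length of the path. -/
noncomputable def pathCell (π : ℕ × ℕ → ℕ) : ℕ × ℕ := (pathRow π (lastCol π + 1), lastCol π)

lemma mem_pathFinset {i j : ℕ} : (i, j) ∈ pathFinset π ↔
    j ≤ lastCol π ∧ pathRow π (lastCol π - j) ≤ i ∧ i ≤ pathRow π (lastCol π + 1 - j) :=
  mem_columnIntervals

lemma apply_eq_of_forall_succ_eq {j r s : ℕ} (h : ∀ i, r ≤ i → i < s → π (i + 1, j) = π (i, j)) :
    ∀ i, r ≤ i → i ≤ s → π (i, j) = π (r, j) := by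
  intro i hri his
  induction i, hri using Nat.le_induction with
  | base => rfl
  | succ i hri ih => rw [h i hri (by omega)]; exact ih (by omega)

lemma apply_lastCol_ne_zero (h0 : π (0, 0) ≠ 0) : π (0, lastCol π) ≠ 0 := by
  rcases h : lastCol π with _ | j
  · exact h0
  · have hj : j < lastCol π := by omega
    exact Nat.notMem_of_lt_sInf (s := {j | π (0, j + 1) = 0}) hj

section extraction

variable (hd : Decreasing π) (hf : (Function.support π).Finite)

include hf in
lemma apply_lastCol_succ : π (0, lastCol π + 1) = 0 := by
  obtain ⟨M, hM⟩ := exists_apply_eq_zero_of_not_le hf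
  exact Nat.sInf_mem (s := {j | π (0, j + 1) = 0}) ⟨M.2, hM _ fun h => by simpa using h.2⟩

include hd hf in
lemma eq_zero_of_lastCol_lt {j : ℕ} (hj : lastCol π < j) (i : ℕ) : π (i, j) = 0 :=
  Nat.eq_zero_of_le_zero <| apply_lastCol_succ hf ▸
    hd.antitone (Prod.mk_le_mk.mpr ⟨Nat.zero_le i, hj⟩)

include hd hf in
lemma exists_descent {j r : ℕ} (hr : π (r, j) ≠ 0) : ∃ i, r ≤ i ∧ π (i + 1, j) < π (i, j) := by
  by_contra! h
  obtain ⟨M, hM⟩ := exists_apply_eq_zero_of_not_le hf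
  have hconst := apply_eq_of_forall_succ_eq (s := r + M.1 + 1)
    (fun i hi _ => le_antisymm (hd.1 i j) (h i hi)) (r + M.1 + 1) (by omega) le_rfl
  rw [hM _ fun hle => by have := (Prod.mk_le_mk.mp hle).1; omega] at hconst
  exact hr hconst.symm

include hd hf in
lemma descentRow_spec {j r : ℕ} (hr : π (r, j) ≠ 0) :
    r ≤ descentRow π j r ∧ π (descentRow π j r + 1, j) < π (descentRow π j r, j) ∧
    ∀ i, r ≤ i → i ≤ descentRow π j r → π (i, j) = π (r, j) := by
  have hmem := Nat.sInf_mem (exists_descent hd hf hr)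
  refine ⟨hmem.1, hmem.2, apply_eq_of_forall_succ_eq fun i hi hlt => ?_⟩
  have hi' : i ∉ {i | r ≤ i ∧ π (i + 1, j) < π (i, j)} := Nat.notMem_of_lt_sInf hlt
  exact le_antisymm (hd.1 i j) (not_lt.mp fun h => hi' ⟨hi, h⟩)

variable (h0 : π (0, 0) ≠ 0)

include hd hf h0 in
lemma pathRow_spec : ∀ k, k ≤ lastCol π →
    π (pathRow π k, lastCol π - k) ≠ 0 ∧ pathRow π k ≤ pathRow π (k + 1) ∧
    π (pathRow π (k + 1) + 1, lastCol π - k) < π (pathRow π (k + 1), lastCol π - k) ∧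
    ∀ i, pathRow π k ≤ i → i ≤ pathRow π (k + 1) →
      π (i, lastCol π - k) = π (pathRow π k, lastCol π - k) := by
  intro k
  induction k with
  | zero =>
    intro _
    have hpos : π (pathRow π 0, lastCol π - 0) ≠ 0 := apply_lastCol_ne_zero h0
    exact ⟨hpos, descentRow_spec hd hf hpos⟩
  | succ k ih =>
    intro hk
    obtain ⟨hpos, hle, -, hconst⟩ := ih (by omega)
    have hpos' : π (pathRow π (k + 1), lastCol π - (k + 1)) ≠ 0 := by
      have := hd.row (pathRow π (k + 1)) (show lastCol π - (k + 1) ≤ lastCol π - k by omega)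
      rw [hconst _ hle le_rfl] at this
      omega
    exact ⟨hpos', descentRow_spec hd hf hpos'⟩

include hd hf h0 in
lemma pathRow_le_succ {k : ℕ} (hk : k ≤ lastCol π) : pathRow π k ≤ pathRow π (k + 1) :=
  (pathRow_spec hd hf h0 k hk).2.1

include hd hf h0 in
lemma pathRow_mono {k l : ℕ} (hkl : k ≤ l) (hl : l ≤ lastCol π + 1) :
    pathRow π k ≤ pathRow π l := by
  induction l, hkl using Nat.le_induction with
  | base => rfl
  | succ l hkl ih => exact (ih (by omega)).trans (pathRow_le_succ hd hf h0 (by omega))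

include hd hf h0 in
lemma pathRow_spec_col {j : ℕ} (hj : j ≤ lastCol π) :
    π (pathRow π (lastCol π - j), j) ≠ 0 ∧
    π (pathRow π (lastCol π + 1 - j) + 1, j) < π (pathRow π (lastCol π + 1 - j), j) ∧
    ∀ i, pathRow π (lastCol π - j) ≤ i → i ≤ pathRow π (lastCol π + 1 - j) →
      π (i, j) = π (pathRow π (lastCol π - j), j) := by
  have h := pathRow_spec hd hf h0 (lastCol π - j) (by omega)
  rw [show lastCol π - (lastCol π - j) = j by omega,
    show lastCol π - j + 1 = lastCol π + 1 - j by omega] at h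
  exact ⟨h.1, h.2.2⟩

include hd hf h0 in
lemma apply_eq_of_mem_pathFinset {i j : ℕ} (hp : (i, j) ∈ pathFinset π) :
    π (i, j) = π (pathRow π (lastCol π - j), j) := by
  obtain ⟨hj, hi⟩ := mem_pathFinset.mp hp
  exact (pathRow_spec_col hd hf h0 hj).2.2 i hi.1 hi.2

include hd hf h0 in
lemma apply_ne_zero_of_mem_pathFinset {p : ℕ × ℕ} (hp : p ∈ pathFinset π) : π p ≠ 0 := by
  obtain ⟨i, j⟩ := p
  rw [apply_eq_of_mem_pathFinset hd hf h0 hp]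
  exact (pathRow_spec_col hd hf h0 (mem_pathFinset.mp hp).1).1

include hd hf h0 in
lemma removePath_succ_fst_le (i j : ℕ) : removePath π (i + 1, j) ≤ removePath π (i, j) := by
  have hcol := hd.1 i j
  simp only [removePath]
  split_ifs with h1 h2 h2
  · omega
  · omega
  · obtain ⟨hj, hlo, hhi⟩ := mem_pathFinset.mp h2
    have hi : i = pathRow π (lastCol π + 1 - j) := by
      by_contra hne
      exact h1 (mem_pathFinset.mpr ⟨hj, by omega, by omega⟩)
    have hdesc := (pathRow_spec_col hd hf h0 hj).2.1
    subst hi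
    omega
  · omega

include hd hf h0 in
lemma removePath_succ_snd_le (i j : ℕ) : removePath π (i, j + 1) ≤ removePath π (i, j) := by
  have hrow := hd.2 i j
  simp only [removePath]
  split_ifs with h1 h2 h2
  · omega
  · omega
  · obtain ⟨hj, hlo, hhi⟩ := mem_pathFinset.mp h2
    have hpos := apply_ne_zero_of_mem_pathFinset hd hf h0 h2
    obtain hjb | hj1 : j = lastCol π ∨ j + 1 ≤ lastCol π := by omega
    · have := eq_zero_of_lastCol_lt hd hf (show lastCol π < j + 1 by omega) i
      omega
    -- the path enters column `j` in the row where it leaves column `j + 1`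
    have hleave : lastCol π + 1 - (j + 1) = lastCol π - j := by omega
    have hlo' : pathRow π (lastCol π - j) < i := by
      by_contra! hle
      exact h1 (mem_pathFinset.mpr ⟨hj1, (pathRow_mono hd hf h0 (by omega) (by omega)).trans hlo,
        hleave ▸ hle⟩)
    obtain ⟨-, hdesc, -⟩ := pathRow_spec_col hd hf h0 hj1
    rw [hleave] at hdesc
    have hc1 : π (i, j + 1) ≤ π (pathRow π (lastCol π - j) + 1, j + 1) := hd.col _ (by omega)
    have hc2 := hd.2 (pathRow π (lastCol π - j)) j
    have hc3 := apply_eq_of_mem_pathFinset hd hf h0 h2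
    omega
  · omega

include hd hf h0 in
lemma removePath_decreasing : Decreasing (removePath π) :=
  ⟨removePath_succ_fst_le hd hf h0, removePath_succ_snd_le hd hf h0⟩

lemma removePath_le (p : ℕ × ℕ) : removePath π p ≤ π p := by
  unfold removePath
  split_ifs <;> omega

include hf in
lemma finite_support_removePath : (Function.support (removePath π)).Finite :=
  hf.subset fun p hp => by
    have := removePath_le (π := π) p
    simp only [Function.mem_support] at hp ⊢
    omega

include hd hf h0 in
lemma card_pathFinset : (pathFinset π).card = cellWeight (pathCell π) := by
  have htelescope : ∀ m ≤ lastCol π + 1,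
      ∑ k ∈ range m, (pathRow π (k + 1) + 1 - pathRow π k) = pathRow π m + m := by
    intro m hm
    induction m with
    | zero => rfl
    | succ m ih =>
      rw [sum_range_succ, ih (by omega)]
      have := pathRow_le_succ hd hf h0 (k := m) (by omega)
      omega
  rw [pathFinset, card_columnIntervals,
    show cellWeight (pathCell π) = pathRow π (lastCol π + 1) + (lastCol π + 1) from rfl,
    ← htelescope _ le_rfl, ← sum_range_reflect (fun k => pathRow π (k + 1) + 1 - pathRow π k)]
  refine sum_congr rfl fun j hj => ?_
  rw [mem_range] at hj
  rw [show lastCol π + 1 - 1 - j + 1 = lastCol π + 1 - j by omega,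
    show lastCol π + 1 - 1 - j = lastCol π - j by omega]

include hd hf h0 in
lemma finsum_removePath_add :
    ∑ᶠ p, removePath π p + cellWeight (pathCell π) = ∑ᶠ p, π p := by
  have hsplit : π = fun p => removePath π p + if p ∈ pathFinset π then 1 else 0 := by
    funext p
    unfold removePath
    split_ifs with hp
    · have := apply_ne_zero_of_mem_pathFinset hd hf h0 hp
      omega
    · rfl
  conv_rhs => rw [hsplit]
  rw [finsum_add_indicator (finite_support_removePath hf), card_pathFinset hd hf h0]

end extraction

noncomputable def runStart (π : ℕ × ℕ → ℕ) (j r : ℕ) : ℕ := sInf {i | π (i, j) = π (r, j)}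

/-- The inserted path starts in row `f` of column `0` and climbs each column to the top of its
run, then continues one column to the right in the same row. It occupies rows
`insRow π f (j + 1)` to `insRow π f j` of column `j`. -/
noncomputable def insRow (π : ℕ × ℕ → ℕ) (f : ℕ) : ℕ → ℕ
  | 0 => f
  | j + 1 => runStart π j (insRow π f j)

noncomputable def insPathFinset (π : ℕ × ℕ → ℕ) (f b : ℕ) : Finset (ℕ × ℕ) :=
  columnIntervals b (fun j => insRow π f (j + 1)) (insRow π f)

noncomputable def addPath (π : ℕ × ℕ → ℕ) (f b : ℕ) (p : ℕ × ℕ) : ℕ :=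
  if p ∈ insPathFinset π f b then π p + 1 else π p

lemma mem_insPathFinset {f b i j : ℕ} :
    (i, j) ∈ insPathFinset π f b ↔ j ≤ b ∧ insRow π f (j + 1) ≤ i ∧ i ≤ insRow π f j :=
  mem_columnIntervals

lemma runStart_le (j r : ℕ) : runStart π j r ≤ r := Nat.sInf_le rfl

lemma runStart_le_of_apply_eq {i j r : ℕ} (h : π (i, j) = π (r, j)) : runStart π j r ≤ i :=
  Nat.sInf_le h

lemma insRow_antitone (f : ℕ) : Antitone (insRow π f) :=
  antitone_nat_of_succ_le fun j => runStart_le j _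

lemma insRow_le (f j : ℕ) : insRow π f j ≤ f :=
  insRow_antitone f (Nat.zero_le j)

section insertion

variable (hd : Decreasing π)

include hd in
lemma apply_eq_of_runStart_le {i j r : ℕ} (h₁ : runStart π j r ≤ i) (h₂ : i ≤ r) :
    π (i, j) = π (r, j) := by
  have hstart : π (runStart π j r, j) = π (r, j) :=
    Nat.sInf_mem (s := {i | π (i, j) = π (r, j)}) ⟨r, rfl⟩
  have := hd.col j h₁
  have := hd.col j h₂
  omega

include hd in
lemma apply_lt_apply_pred_runStart {j r : ℕ} (hpos : 0 < runStart π j r) :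
    π (r, j) < π (runStart π j r - 1, j) := by
  have hne : runStart π j r - 1 ∉ {i | π (i, j) = π (r, j)} :=
    Nat.notMem_of_lt_sInf (Nat.sub_lt hpos Nat.one_pos)
  have := hd.col j (Nat.sub_le (runStart π j r) 1)
  have := apply_eq_of_runStart_le hd (le_refl (runStart π j r)) (runStart_le j r)
  simp only [Set.mem_ofPred_eq] at hne
  omega

include hd in
lemma apply_insRow_eq {f i j : ℕ} (h₁ : insRow π f (j + 1) ≤ i) (h₂ : i ≤ insRow π f j) :
    π (i, j) = π (insRow π f j, j) :=
  apply_eq_of_runStart_le hd h₁ h₂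

include hd in
lemma addPath_succ_fst_le (f b i j : ℕ) : addPath π f b (i + 1, j) ≤ addPath π f b (i, j) := by
  have hcol := hd.1 i j
  simp only [addPath]
  split_ifs with h1 h2 h2
  · omega
  · -- the path enters column `j` at the top of a run, which lies strictly below the run above it
    obtain ⟨hj, hlo, hhi⟩ := mem_insPathFinset.mp h1
    have hstart : insRow π f (j + 1) = i + 1 := by
      by_contra hne
      exact h2 (mem_insPathFinset.mpr ⟨hj, by omega, by omega⟩)
    have hlt := apply_lt_apply_pred_runStart hd (j := j) (r := insRow π f j) (by
      change 0 < insRow π f (j + 1)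
      omega)
    change π (insRow π f j, j) < π (insRow π f (j + 1) - 1, j) at hlt
    rw [hstart, Nat.add_sub_cancel, ← apply_insRow_eq hd hstart.le hhi] at hlt
    omega
  · omega
  · omega

include hd in
lemma addPath_succ_snd_le (f b i j : ℕ) : addPath π f b (i, j + 1) ≤ addPath π f b (i, j) := by
  have hrow := hd.2 i j
  simp only [addPath]
  split_ifs with h1 h2 h2
  · omega
  · obtain ⟨hj, hlo, hhi⟩ := mem_insPathFinset.mp h1
    have hi : i < insRow π f (j + 1) := by
      by_contra! hle
      exact h2 (mem_insPathFinset.mpr ⟨by omega, hle, hhi.trans (insRow_antitone f (by omega))⟩)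
    -- otherwise row `i` of column `j` would already belong to the run climbed in column `j`
    by_contra! hgt
    have h₁ : π (i, j + 1) = π (insRow π f (j + 1), j + 1) := apply_insRow_eq hd hlo hhi
    have h₂ := hd.2 (insRow π f (j + 1)) j
    have h₃ := hd.col j hi.le
    have h₄ := apply_insRow_eq hd (f := f) (j := j) le_rfl (insRow_antitone f (Nat.le_succ j))
    have := runStart_le_of_apply_eq (π := π) (i := i) (j := j) (r := insRow π f j) (by omega)
    change insRow π f (j + 1) ≤ i at this
    omega
  · omega
  · omega

include hd in
lemma addPath_decreasing (f b : ℕ) : Decreasing (addPath π f b) :=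
  ⟨addPath_succ_fst_le hd f b, addPath_succ_snd_le hd f b⟩

lemma card_insPathFinset (f b : ℕ) :
    (insPathFinset π f b).card = f + (b + 1) - insRow π f (b + 1) := by
  rw [insPathFinset, card_columnIntervals]
  induction b with
  | zero => simp [insRow]
  | succ b ih =>
    rw [sum_range_succ, ih]
    have h₁ : insRow π f (b + 1 + 1) ≤ insRow π f (b + 1) := insRow_antitone f (by omega)
    have h₂ := insRow_le (π := π) f (b + 1)
    omega

lemma finsum_addPath (hf : (Function.support π).Finite) (f b : ℕ) :
    ∑ᶠ p, addPath π f b p = ∑ᶠ p, π p + (f + (b + 1) - insRow π f (b + 1)) := by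
  rw [← card_insPathFinset, ← finsum_add_indicator hf]
  congr 1
  funext p
  unfold addPath
  split_ifs <;> rfl

end insertion

section addRemove

variable (hd : Decreasing π) {f b : ℕ} (hcols : ∀ i j, b < j → π (i, j) = 0)
  (hD : insRow π f (b + 1) = 0)

include hd hcols hD in
lemma lastCol_addPath : lastCol (addPath π f b) = b := by
  refine IsLeast.csInf_eq ⟨?_, fun c hc => ?_⟩
  · have hout : (0, b + 1) ∉ insPathFinset π f b := fun h => by
      have := (mem_insPathFinset.mp h).1
      omega
    change addPath π f b (0, b + 1) = 0
    rw [addPath, if_neg hout]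
    exact hcols 0 (b + 1) (Nat.lt_succ_self b)
  · by_contra! hcb
    have hin : (0, b) ∈ insPathFinset π f b := mem_insPathFinset.mpr ⟨le_rfl, hD.le, Nat.zero_le _⟩
    have := (addPath_decreasing hd f b).row 0 (show c + 1 ≤ b by omega)
    change addPath π f b (0, c + 1) = 0 at hc
    rw [hc, addPath, if_pos hin] at this
    omega

include hd hcols hD in
lemma pathRow_addPath : ∀ k ≤ b + 1, pathRow (addPath π f b) k = insRow π f (b + 1 - k) := by
  intro k
  induction k with
  | zero => exact fun _ => hD.symm
  | succ k ih =>
    intro hk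
    rw [pathRow, lastCol_addPath hd hcols hD, ih (by omega),
      show b + 1 - k = b - k + 1 by omega, show b + 1 - (k + 1) = b - k by omega]
    set j := b - k
    have hin {i : ℕ} (h₁ : insRow π f (j + 1) ≤ i) (h₂ : i ≤ insRow π f j) :
        addPath π f b (i, j) = π (insRow π f j, j) + 1 := by
      rw [addPath, if_pos (mem_insPathFinset.mpr ⟨by omega, h₁, h₂⟩), apply_insRow_eq hd h₁ h₂]
    have hle : insRow π f (j + 1) ≤ insRow π f j := insRow_antitone f (Nat.le_succ j)
    refine IsLeast.csInf_eq ⟨⟨hle, ?_⟩, fun i ⟨h₁, hdesc⟩ => ?_⟩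
    · have hout : (insRow π f j + 1, j) ∉ insPathFinset π f b := fun h => by
        have := (mem_insPathFinset.mp h).2.2
        omega
      rw [hin hle le_rfl, addPath, if_neg hout]
      have := hd.1 (insRow π f j) j
      omega
    · by_contra! hi
      rw [hin h₁ hi.le, hin (by omega) hi] at hdesc
      exact lt_irrefl _ hdesc

include hd hcols hD in
lemma pathFinset_addPath : pathFinset (addPath π f b) = insPathFinset π f b := by
  ext ⟨i, j⟩
  rw [mem_pathFinset, mem_insPathFinset, lastCol_addPath hd hcols hD]
  by_cases hj : j ≤ b
  · rw [pathRow_addPath hd hcols hD (b - j) (by omega),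
      pathRow_addPath hd hcols hD (b + 1 - j) (by omega),
      show b + 1 - (b - j) = j + 1 by omega, show b + 1 - (b + 1 - j) = j by omega]
  · simp [hj]

include hd hcols hD in
lemma removePath_addPath : removePath (addPath π f b) = π := by
  funext p
  rw [removePath, pathFinset_addPath hd hcols hD, addPath]
  split_ifs <;> simp

include hd hcols hD in
lemma pathCell_addPath : pathCell (addPath π f b) = (f, b) := by
  rw [pathCell, lastCol_addPath hd hcols hD, pathRow_addPath hd hcols hD (b + 1) le_rfl,
    Nat.sub_self]
  rfl

end addRemove

section removeAdd

variable (hd : Decreasing π) (hf : (Function.support π).Finite) (h0 : π (0, 0) ≠ 0)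

include hd hf h0 in
lemma insRow_removePath : ∀ k ≤ lastCol π + 1,
    insRow (removePath π) (pathCell π).1 k = pathRow π (lastCol π + 1 - k) := by
  intro k
  induction k with
  | zero => exact fun _ => rfl
  | succ k ih =>
    intro hk
    rw [insRow, ih (by omega), show lastCol π + 1 - (k + 1) = lastCol π - k by omega]
    obtain ⟨hpos, -, hconst⟩ := pathRow_spec_col hd hf h0 (j := k) (by omega)
    have hle := pathRow_mono hd hf h0 (show lastCol π - k ≤ lastCol π + 1 - k by omega) (by omega)
    have hon {i : ℕ} (h₁ : pathRow π (lastCol π - k) ≤ i) (h₂ : i ≤ pathRow π (lastCol π + 1 - k)) :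
        removePath π (i, k) = π (pathRow π (lastCol π - k), k) - 1 := by
      rw [removePath, if_pos (mem_pathFinset.mpr ⟨by omega, h₁, h₂⟩), hconst i h₁ h₂]
    refine IsLeast.csInf_eq ⟨?_, fun i hi => ?_⟩
    · change removePath π (_, k) = removePath π (_, k)
      rw [hon le_rfl hle, hon hle le_rfl]
    · change removePath π (i, k) = removePath π (_, k) at hi
      by_contra! hlt
      have hout : (i, k) ∉ pathFinset π := fun h => by
        have := (mem_pathFinset.mp h).2.1
        omega
      rw [hon hle le_rfl, removePath, if_neg hout] at hi
      have := hd.col k hlt.le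
      omega

include hd hf h0 in
lemma insPathFinset_removePath :
    insPathFinset (removePath π) (pathCell π).1 (pathCell π).2 = pathFinset π := by
  ext ⟨i, j⟩
  rw [mem_pathFinset, mem_insPathFinset]
  change j ≤ lastCol π ∧ _ ↔ _
  by_cases hj : j ≤ lastCol π
  · rw [insRow_removePath hd hf h0 (j + 1) (by omega), insRow_removePath hd hf h0 j (by omega),
      show lastCol π + 1 - (j + 1) = lastCol π - j by omega]
  · simp [hj]

include hd hf h0 in
lemma addPath_removePath : addPath (removePath π) (pathCell π).1 (pathCell π).2 = π := by
  funext p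
  rw [addPath, insPathFinset_removePath hd hf h0, removePath]
  split_ifs with hp
  · have := apply_ne_zero_of_mem_pathFinset hd hf h0 hp
    omega
  · rfl

end removeAdd

/-- `toCells` produces cells in decreasing `CellLE` order. -/
def CellLE (c' c : ℕ × ℕ) : Prop := c'.2 < c.2 ∨ (c'.2 = c.2 ∧ c.1 ≤ c'.1)

lemma CellLE.refl (c : ℕ × ℕ) : CellLE c c := Or.inr ⟨rfl, le_rfl⟩

lemma CellLE.trans {a b c : ℕ × ℕ} (h₁ : CellLE a b) (h₂ : CellLE b c) : CellLE a c := by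
  unfold CellLE at *
  omega

lemma CellLE.antisymm {a b : ℕ × ℕ} (h₁ : CellLE a b) (h₂ : CellLE b a) : a = b := by
  unfold CellLE at *
  exact Prod.ext (by omega) (by omega)

noncomputable def maxCell (T : Multiset (ℕ × ℕ)) : ℕ × ℕ :=
  (sInf {i | (i, T.toFinset.sup Prod.snd) ∈ T}, T.toFinset.sup Prod.snd)

lemma maxCell_mem {T : Multiset (ℕ × ℕ)} (hT : T ≠ 0) : maxCell T ∈ T := by
  obtain ⟨c, hc, hcs⟩ :=
    exists_mem_eq_sup T.toFinset (Multiset.toFinset_nonempty.mpr hT) Prod.snd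
  exact Nat.sInf_mem (s := {i | (i, T.toFinset.sup Prod.snd) ∈ T})
    ⟨c.1, by change (c.1, _) ∈ T; rw [hcs]; exact Multiset.mem_toFinset.mp hc⟩

lemma cellLE_maxCell {T : Multiset (ℕ × ℕ)} {c : ℕ × ℕ} (hc : c ∈ T) : CellLE c (maxCell T) := by
  have hsup : c.2 ≤ (maxCell T).2 := le_sup (f := Prod.snd) (Multiset.mem_toFinset.mpr hc)
  obtain hlt | heq := hsup.lt_or_eq
  · exact Or.inl hlt
  · refine Or.inr ⟨heq, Nat.sInf_le ?_⟩
    change (c.1, (maxCell T).2) ∈ T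
    rwa [← heq]

lemma maxCell_eq_of_forall_cellLE {T : Multiset (ℕ × ℕ)} {c : ℕ × ℕ} (hc : c ∈ T)
    (hmax : ∀ c' ∈ T, CellLE c' c) : maxCell T = c :=
  (hmax _ (maxCell_mem fun h => Multiset.notMem_zero c (h ▸ hc))).antisymm (cellLE_maxCell hc)

section order

variable (hd : Decreasing π) (hf : (Function.support π).Finite) (h0 : π (0, 0) ≠ 0)

include hf in
lemma lastCol_removePath_le : lastCol (removePath π) ≤ lastCol π :=
  Nat.sInf_le <| Nat.eq_zero_of_le_zero <|
    (removePath_le (0, lastCol π + 1)).trans_eq (apply_lastCol_succ hf)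

include hd hf h0 in
lemma pathRow_le_pathRow_removePath (heq : lastCol (removePath π) = lastCol π)
    (h0' : removePath π (0, 0) ≠ 0) :
    ∀ k ≤ lastCol π + 1, pathRow π k ≤ pathRow (removePath π) k := by
  intro k
  induction k with
  | zero => exact fun _ => le_rfl
  | succ k ih =>
    intro hk
    by_contra! hlt
    -- otherwise the descent of `removePath π` would lie strictly inside a constant run of the path
    obtain ⟨-, hle, hdesc, -⟩ := pathRow_spec (removePath_decreasing hd hf h0)
      (finite_support_removePath hf) h0' k (by omega)
    rw [heq] at hdesc
    set i := pathRow (removePath π) (k + 1)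
    have hj : lastCol π - (lastCol π - k) = k := by omega
    have hj' : lastCol π + 1 - (lastCol π - k) = k + 1 := by omega
    have hmem {i' : ℕ} (h₁ : pathRow π k ≤ i') (h₂ : i' ≤ pathRow π (k + 1)) :
        (i', lastCol π - k) ∈ pathFinset π :=
      mem_pathFinset.mpr ⟨by omega, by rwa [hj], by rwa [hj']⟩
    have hi := hmem (by have := ih (by omega); omega) hlt.le
    have hi1 : (i + 1, lastCol π - k) ∈ pathFinset π :=
      hmem (by have := ih (by omega); omega) hlt
    simp only [removePath, if_pos hi, if_pos hi1, apply_eq_of_mem_pathFinset hd hf h0 hi,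
      apply_eq_of_mem_pathFinset hd hf h0 hi1] at hdesc
    exact lt_irrefl _ hdesc

include hd hf h0 in
lemma pathCell_removePath_cellLE (h0' : removePath π (0, 0) ≠ 0) :
    CellLE (pathCell (removePath π)) (pathCell π) := by
  obtain hlt | heq := (lastCol_removePath_le hf (π := π)).lt_or_eq
  · exact Or.inl hlt
  · refine Or.inr ⟨heq, ?_⟩
    change pathRow π (lastCol π + 1) ≤ pathRow (removePath π) (lastCol (removePath π) + 1)
    rw [heq]
    exact pathRow_le_pathRow_removePath hd hf h0 heq h0' _ le_rfl

include hd hf h0 in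
lemma insRow_le_pathRow {f : ℕ} (hfle : f ≤ pathRow π (lastCol π + 1)) :
    ∀ k ≤ lastCol π + 1, insRow π f k ≤ pathRow π (lastCol π + 1 - k) := by
  intro k
  induction k with
  | zero => exact fun _ => hfle
  | succ k ih =>
    intro hk
    have ihk := ih (by omega)
    rw [insRow, show lastCol π + 1 - (k + 1) = lastCol π - k by omega]
    by_cases hlt : insRow π f k < pathRow π (lastCol π - k)
    · exact (runStart_le _ _).trans hlt.le
    · -- row `insRow π f k` lies in the constant run of the path in column `k`
      have hconst := (pathRow_spec_col hd hf h0 (j := k) (by omega)).2.2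
      exact runStart_le_of_apply_eq (hconst _ (by omega) ihk).symm

end order

lemma insRow_eq_zero_of_apply_eq_zero (hd : Decreasing π) {b : ℕ} (hb : π (0, b) = 0) (f : ℕ) :
    insRow π f (b + 1) = 0 := by
  have hcol : π (insRow π f b, b) = 0 := Nat.eq_zero_of_le_zero (hb ▸ hd.col b (Nat.zero_le _))
  exact Nat.eq_zero_of_le_zero (runStart_le_of_apply_eq (hb.trans hcol.symm))

lemma eq_zero_of_isPlanePartition {n : ℕ} (h : IsPlanePartition n π) (h0 : π (0, 0) = 0) :
    π = 0 ∧ n = 0 := by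
  obtain ⟨-, hd, hsum⟩ := isPlanePartition_iff.mp h
  have hπ := hd.eq_zero h0
  refine ⟨hπ, ?_⟩
  rw [← hsum, hπ]
  exact finsum_zero

lemma eq_zero_of_isPlanePartition_zero (h : IsPlanePartition 0 π) : π = 0 := by
  obtain ⟨hf, -, -, hsum⟩ := h
  rw [finsum_eq_sum π hf] at hsum
  funext p
  by_contra hp
  exact hp (sum_eq_zero_iff.mp hsum p (by simpa using hp))

lemma isPlanePartition_zero : IsPlanePartition 0 (0 : ℕ × ℕ → ℕ) :=
  ⟨by simp, fun _ _ => le_rfl, fun _ _ => le_rfl, finsum_zero⟩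

lemma isPlanePartition_removePath {n : ℕ} (h : IsPlanePartition n π) (h0 : π (0, 0) ≠ 0) :
    IsPlanePartition (n - cellWeight (pathCell π)) (removePath π) ∧
      cellWeight (pathCell π) ≤ n := by
  obtain ⟨hf, hd, hsum⟩ := isPlanePartition_iff.mp h
  have := finsum_removePath_add hd hf h0
  exact ⟨isPlanePartition_iff.mpr ⟨finite_support_removePath hf,
    removePath_decreasing hd hf h0, by omega⟩, by omega⟩

lemma insRow_eq_zero_of_cellLE {m f b : ℕ} (h : IsPlanePartition m π)
    (hcols : ∀ i j, b < j → π (i, j) = 0) (hle : π (0, 0) ≠ 0 → CellLE (pathCell π) (f, b)) :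
    insRow π f (b + 1) = 0 := by
  obtain ⟨hf, hd, -⟩ := isPlanePartition_iff.mp h
  by_cases hb : π (0, b) = 0
  · exact insRow_eq_zero_of_apply_eq_zero hd hb f
  have h0 : π (0, 0) ≠ 0 := fun h0 => by
    have := hd.row 0 (Nat.zero_le b)
    omega
  have hlast : lastCol π = b := by
    refine le_antisymm (not_lt.mp fun hlt => apply_lastCol_ne_zero h0 (hcols 0 _ hlt)) ?_
    exact not_lt.mp fun hlt => hb (eq_zero_of_lastCol_lt hd hf hlt 0)
  have hf' : f ≤ pathRow π (lastCol π + 1) := by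
    have := hle h0
    unfold CellLE pathCell at this
    omega
  have := insRow_le_pathRow hd hf h0 hf' (lastCol π + 1) le_rfl
  rw [Nat.sub_self, hlast] at this
  exact Nat.eq_zero_of_le_zero this

lemma isPlanePartition_addPath {m f b : ℕ} (h : IsPlanePartition m π)
    (hcols : ∀ i j, b < j → π (i, j) = 0) (hle : π (0, 0) ≠ 0 → CellLE (pathCell π) (f, b)) :
    IsPlanePartition (m + cellWeight (f, b)) (addPath π f b) ∧
      pathCell (addPath π f b) = (f, b) ∧ removePath (addPath π f b) = π ∧
      addPath π f b (0, 0) ≠ 0 := by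
  obtain ⟨hf, hd, hsum⟩ := isPlanePartition_iff.mp h
  have hD := insRow_eq_zero_of_cellLE h hcols hle
  have hfin : (Function.support (addPath π f b)).Finite :=
    (hf.union (insPathFinset π f b).finite_toSet).subset fun p hp => by
      by_cases hin : p ∈ insPathFinset π f b
      · exact Or.inr hin
      · exact Or.inl (by simpa [addPath, hin] using hp)
  have hsum' := finsum_addPath hf f b
  rw [hD, hsum] at hsum'
  refine ⟨isPlanePartition_iff.mpr ⟨hfin, addPath_decreasing hd f b, hsum'⟩,
    pathCell_addPath hd hcols hD, removePath_addPath hd hcols hD, fun h0 => ?_⟩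
  have hin : (0, b) ∈ insPathFinset π f b := mem_insPathFinset.mpr ⟨le_rfl, hD.le, Nat.zero_le _⟩
  have := (addPath_decreasing hd f b).row 0 (Nat.zero_le b)
  rw [h0, addPath, if_pos hin] at this
  omega

/-- Repeatedly remove paths, recording their cells. Each step lowers the sum of the entries by
at least one, so `fuel ≥ n` steps exhaust a plane partition of `n`. -/
noncomputable def toCells : ℕ → (ℕ × ℕ → ℕ) → Multiset (ℕ × ℕ)
  | 0, _ => 0
  | fuel + 1, π => if π (0, 0) = 0 then 0 else pathCell π ::ₘ toCells fuel (removePath π)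

/-- Insert the paths of the cells of `T`, starting with the `CellLE`-smallest one; `fuel` bounds
the number of cells. -/
noncomputable def ofCells : ℕ → Multiset (ℕ × ℕ) → ℕ × ℕ → ℕ
  | 0, _ => 0
  | fuel + 1, T =>
    if T = 0 then 0 else addPath (ofCells fuel (T.erase (maxCell T))) (maxCell T).1 (maxCell T).2

lemma toCells_of_apply_eq_zero (fuel : ℕ) (h0 : π (0, 0) = 0) : toCells fuel π = 0 := by
  cases fuel with
  | zero => rfl
  | succ fuel => exact if_pos h0

lemma toCells_succ_of_apply_ne_zero (fuel : ℕ) (h0 : π (0, 0) ≠ 0) :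
    toCells (fuel + 1) π = pathCell π ::ₘ toCells fuel (removePath π) :=
  if_neg h0

lemma ofCells_zero_right (fuel : ℕ) : ofCells fuel 0 = 0 := by
  cases fuel with
  | zero => rfl
  | succ fuel => exact if_pos rfl

lemma totalWeight_toCells : ∀ {fuel n : ℕ} {π : ℕ × ℕ → ℕ}, n ≤ fuel → IsPlanePartition n π →
    totalWeight (toCells fuel π) = n
  | 0, n, π, hn, _ => by rw [Nat.le_zero.mp hn]; rfl
  | fuel + 1, n, π, hn, h => by
    by_cases h0 : π (0, 0) = 0
    · rw [toCells_of_apply_eq_zero _ h0, (eq_zero_of_isPlanePartition h h0).2]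
      rfl
    · obtain ⟨h', hw⟩ := isPlanePartition_removePath h h0
      have := cellWeight_pos (pathCell π)
      rw [toCells_succ_of_apply_ne_zero _ h0, totalWeight_cons,
        totalWeight_toCells (by omega) h']
      omega

lemma cellLE_pathCell_of_mem_toCells : ∀ {fuel n : ℕ} {π : ℕ × ℕ → ℕ}, n ≤ fuel →
    IsPlanePartition n π → ∀ c ∈ toCells fuel π, CellLE c (pathCell π)
  | 0, _, _, _, _, c, hc => absurd hc (Multiset.notMem_zero c)
  | fuel + 1, n, π, hn, h, c, hc => by
    by_cases h0 : π (0, 0) = 0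
    · rw [toCells_of_apply_eq_zero _ h0] at hc
      exact absurd hc (Multiset.notMem_zero c)
    rw [toCells_succ_of_apply_ne_zero _ h0, Multiset.mem_cons] at hc
    obtain rfl | hc := hc
    · exact CellLE.refl _
    obtain ⟨h', hw⟩ := isPlanePartition_removePath h h0
    have := cellWeight_pos (pathCell π)
    by_cases h0' : removePath π (0, 0) = 0
    · rw [toCells_of_apply_eq_zero _ h0'] at hc
      exact absurd hc (Multiset.notMem_zero c)
    obtain ⟨hf, hd, -⟩ := isPlanePartition_iff.mp h
    exact (cellLE_pathCell_of_mem_toCells (by omega) h' c hc).trans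
      (pathCell_removePath_cellLE hd hf h0 h0')

lemma ofCells_toCells : ∀ {fuel n : ℕ} {π : ℕ × ℕ → ℕ}, n ≤ fuel → IsPlanePartition n π →
    ofCells fuel (toCells fuel π) = π
  | 0, n, π, hn, h => by
    obtain rfl := Nat.le_zero.mp hn
    rw [eq_zero_of_isPlanePartition_zero h]
    rfl
  | fuel + 1, n, π, hn, h => by
    by_cases h0 : π (0, 0) = 0
    · rw [toCells_of_apply_eq_zero _ h0, ofCells_zero_right, (eq_zero_of_isPlanePartition h h0).1]
    obtain ⟨h', hw⟩ := isPlanePartition_removePath h h0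
    obtain ⟨hf, hd, -⟩ := isPlanePartition_iff.mp h
    have hmem : pathCell π ∈ toCells (fuel + 1) π := by
      rw [toCells_succ_of_apply_ne_zero _ h0]
      exact Multiset.mem_cons_self _ _
    have hmax := maxCell_eq_of_forall_cellLE hmem (cellLE_pathCell_of_mem_toCells hn h)
    have := cellWeight_pos (pathCell π)
    rw [ofCells, if_neg (by rw [toCells_succ_of_apply_ne_zero _ h0]; exact Multiset.cons_ne_zero),
      hmax, toCells_succ_of_apply_ne_zero _ h0, Multiset.erase_cons_head,
      ofCells_toCells (by omega) h', addPath_removePath hd hf h0]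

lemma ofCells_eq_zero_of_lt : ∀ {fuel : ℕ} {T : Multiset (ℕ × ℕ)} {b : ℕ}, (∀ c ∈ T, c.2 ≤ b) →
    ∀ i j, b < j → ofCells fuel T (i, j) = 0
  | 0, _, _, _, _, _, _ => rfl
  | fuel + 1, T, b, hT, i, j, hj => by
    by_cases hT0 : T = 0
    · subst hT0
      rw [ofCells_zero_right]
      rfl
    have hout : (i, j) ∉ insPathFinset (ofCells fuel (T.erase (maxCell T))) (maxCell T).1
        (maxCell T).2 := fun h => by
      have := (mem_insPathFinset.mp h).1
      have := hT _ (maxCell_mem hT0)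
      omega
    rw [ofCells, if_neg hT0, addPath, if_neg hout]
    exact ofCells_eq_zero_of_lt (fun c hc => hT c (Multiset.mem_of_mem_erase hc)) i j hj

lemma ofCells_spec : ∀ {fuel : ℕ} {T : Multiset (ℕ × ℕ)}, Multiset.card T ≤ fuel →
    IsPlanePartition (totalWeight T) (ofCells fuel T) ∧
      (T ≠ 0 → pathCell (ofCells fuel T) = maxCell T) ∧
      ∀ fuel', totalWeight T ≤ fuel' → toCells fuel' (ofCells fuel T) = T
  | fuel, T, hT => by
    by_cases hT0 : T = 0
    · subst hT0
      rw [ofCells_zero_right]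
      exact ⟨isPlanePartition_zero, fun h => absurd rfl h,
        fun fuel' _ => toCells_of_apply_eq_zero fuel' rfl⟩
    obtain ⟨fuel, rfl⟩ : ∃ fuel', fuel = fuel' + 1 :=
      Nat.exists_eq_add_one.mpr (hT.trans_lt' (Multiset.card_pos.mpr hT0))
    obtain ⟨⟨f, b⟩, hc⟩ : ∃ c, maxCell T = c := ⟨_, rfl⟩
    have hcT : (f, b) ∈ T := hc ▸ maxCell_mem hT0
    set T' := T.erase (f, b)
    have hcons : (f, b) ::ₘ T' = T := Multiset.cons_erase hcT
    have hweight : totalWeight T = totalWeight T' + cellWeight (f, b) := by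
      have := congrArg totalWeight hcons
      rw [totalWeight_cons] at this
      omega
    have hcard : Multiset.card T' ≤ fuel := by
      have := congrArg Multiset.card hcons
      rw [Multiset.card_cons] at this
      omega
    obtain ⟨h', hcell', hround'⟩ := ofCells_spec hcard
    have hcols : ∀ i j, b < j → ofCells fuel T' (i, j) = 0 :=
      ofCells_eq_zero_of_lt fun c' hc' => by
        have := cellLE_maxCell (Multiset.mem_of_mem_erase hc')
        rw [hc] at this
        unfold CellLE at this
        omega
    have hle : ofCells fuel T' (0, 0) ≠ 0 → CellLE (pathCell (ofCells fuel T')) (f, b) := by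
      intro h0
      have hT' : T' ≠ 0 := fun h => h0 (by rw [h, ofCells_zero_right]; rfl)
      rw [hcell' hT', ← hc]
      exact cellLE_maxCell (Multiset.mem_of_mem_erase (maxCell_mem hT'))
    obtain ⟨hpp, hcell, hround, h0⟩ := isPlanePartition_addPath h' hcols hle
    have hofCells : ofCells (fuel + 1) T = addPath (ofCells fuel T') f b := by
      rw [ofCells, if_neg hT0, hc]
    refine ⟨hweight ▸ hofCells ▸ hpp, fun _ => hc ▸ hofCells ▸ hcell, fun fuel' hfuel' => ?_⟩
    have := cellWeight_pos (f, b)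
    obtain ⟨fuel', rfl⟩ : ∃ f, fuel' = f + 1 := Nat.exists_eq_add_one.mpr (by omega)
    rw [hofCells, toCells_succ_of_apply_ne_zero _ h0, hcell, hround, hround' _ (by omega), hcons]

def cellsOfWeightLE (n : ℕ) : Finset (ℕ × ℕ) :=
  (range n ×ˢ range n).filter (cellWeight · ≤ n)

@[simp] lemma mem_cellsOfWeightLE {n : ℕ} {c : ℕ × ℕ} :
    c ∈ cellsOfWeightLE n ↔ cellWeight c ≤ n := by
  simp only [cellsOfWeightLE, mem_filter, mem_product, mem_range, and_iff_right_iff_imp]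
  simp only [cellWeight]
  omega

lemma card_cellsOfWeightLE_filter_eq {n d : ℕ} (hd : d ∈ Icc 1 n) :
    ((cellsOfWeightLE n).filter (cellWeight · = d)).card = d := by
  have : (cellsOfWeightLE n).filter (cellWeight · = d) = antidiagonal (d - 1) := by
    ext c
    simp only [mem_Icc] at hd
    simp only [mem_filter, mem_cellsOfWeightLE, HasAntidiagonal.mem_antidiagonal]
    unfold cellWeight
    omega
  rw [this, Finset.Nat.card_antidiagonal]
  simp only [mem_Icc] at hd
  omega

def cellMultisets (n : ℕ) : Finset (Multiset (ℕ × ℕ)) :=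
  ((n • (cellsOfWeightLE n).val).powerset.toFinset).filter (totalWeight · = n)

@[simp] lemma mem_cellMultisets {n : ℕ} {T : Multiset (ℕ × ℕ)} :
    T ∈ cellMultisets n ↔ totalWeight T = n := by
  simp only [cellMultisets, mem_filter, Multiset.mem_toFinset, Multiset.mem_powerset,
    and_iff_right_iff_imp]
  rintro rfl
  rw [Multiset.le_iff_count]
  intro c
  rw [Multiset.count_nsmul]
  by_cases hc : c ∈ T
  · rw [Multiset.count_eq_one_of_mem (cellsOfWeightLE _).nodup
      (mem_cellsOfWeightLE.mpr (cellWeight_le_totalWeight hc)), mul_one]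
    exact (Multiset.count_le_card c T).trans (card_le_totalWeight T)
  · simp [Multiset.count_eq_zero_of_notMem hc]

lemma cellMultisets_zero : cellMultisets 0 = {0} := by
  ext T
  rw [mem_cellMultisets, mem_singleton]
  refine ⟨fun h => Multiset.card_eq_zero.mp (by have := card_le_totalWeight T; omega), ?_⟩
  rintro rfl
  rfl

lemma card_filter_le_count (n m : ℕ) (c : ℕ × ℕ) :
    ((cellMultisets n).filter (m ≤ ·.count c)).card
      = if m * cellWeight c ≤ n then (cellMultisets (n - m * cellWeight c)).card else 0 := by
  have hsplit {T : Multiset (ℕ × ℕ)} (h : m ≤ T.count c) :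
      T - Multiset.replicate m c + Multiset.replicate m c = T :=
    tsub_add_cancel_of_le (Multiset.le_count_iff_replicate_le.mp h)
  split_ifs with hle
  · refine card_bij' (fun T _ => T - Multiset.replicate m c)
      (fun S _ => S + Multiset.replicate m c) (fun T hT => ?_) (fun S hS => ?_)
      (fun T hT => hsplit (mem_filter.mp hT).2) (fun S _ => add_tsub_cancel_right _ _)
    · obtain ⟨hT, hm⟩ := mem_filter.mp hT
      have := congrArg totalWeight (hsplit hm)
      rw [totalWeight_add, totalWeight_replicate, mem_cellMultisets.mp hT] at this
      rw [mem_cellMultisets]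
      omega
    · rw [mem_cellMultisets] at hS
      simp only [mem_filter, mem_cellMultisets, totalWeight_add, totalWeight_replicate, hS,
        Multiset.count_add, Multiset.count_replicate_self]
      omega
  · refine card_eq_zero.mpr (filter_eq_empty_iff.mpr fun T hT hm => hle ?_)
    have := congrArg totalWeight (hsplit hm)
    rw [totalWeight_add, totalWeight_replicate, mem_cellMultisets.mp hT] at this
    omega

lemma sum_count_cellMultisets (n : ℕ) (c : ℕ × ℕ) :
    ∑ T ∈ cellMultisets n, T.count c
      = ∑ k ∈ Icc 1 n with cellWeight c ∣ k, (cellMultisets (n - k)).card := by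
  have hcount {T} (hT : T ∈ cellMultisets n) :
      T.count c = ((Icc 1 n).filter (· ≤ T.count c)).card := by
    have := (Multiset.count_le_card c T).trans (card_le_totalWeight T)
    rw [mem_cellMultisets.mp hT] at this
    rw [show (Icc 1 n).filter (· ≤ T.count c) = Icc 1 (T.count c) by ext; simp; omega,
      Nat.card_Icc, Nat.add_sub_cancel]
  have hw : 0 < cellWeight c := Nat.succ_pos _
  calc ∑ T ∈ cellMultisets n, T.count c
      = ∑ m ∈ Icc 1 n, ((cellMultisets n).filter (m ≤ ·.count c)).card := by
        simp_rw [card_filter]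
        rw [sum_congr rfl fun T hT => hcount hT, sum_comm]
        simp only [card_filter]
    _ = ∑ m ∈ Icc 1 n with m * cellWeight c ≤ n,
          (cellMultisets (n - m * cellWeight c)).card := by
        simp_rw [card_filter_le_count, sum_filter]
    _ = ∑ k ∈ Icc 1 n with cellWeight c ∣ k, (cellMultisets (n - k)).card := by
        refine sum_nbij' (· * cellWeight c) (· / cellWeight c) ?_ ?_ ?_ ?_ fun _ _ => rfl
        · intro m hm
          simp only [mem_filter, mem_Icc] at hm ⊢
          exact ⟨⟨hm.1.1.trans (Nat.le_mul_of_pos_right m hw), hm.2⟩, dvd_mul_left _ _⟩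
        · intro k hk
          simp only [mem_filter, mem_Icc] at hk ⊢
          obtain ⟨⟨hk1, hkn⟩, m, rfl⟩ := hk
          rw [Nat.mul_div_cancel_left m hw]
          refine ⟨⟨Nat.pos_of_mul_pos_left hk1, ?_⟩, by rwa [mul_comm]⟩
          exact (Nat.le_mul_of_pos_left m hw).trans hkn
        · intro m _
          exact Nat.mul_div_cancel m hw
        · intro k hk
          exact Nat.div_mul_cancel (mem_filter.mp hk).2

lemma sum_cellsOfWeightLE {M : Type*} [AddCommMonoid M] (n : ℕ) (g : ℕ → M) :
    ∑ c ∈ cellsOfWeightLE n, g (cellWeight c) = ∑ d ∈ Icc 1 n, d • g d := by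
  rw [← sum_fiberwise_of_maps_to (g := cellWeight) (t := Icc 1 n)
    fun c hc => mem_Icc.mpr ⟨Nat.succ_pos _, mem_cellsOfWeightLE.mp hc⟩]
  refine sum_congr rfl fun d hd => ?_
  rw [sum_congr rfl fun c hc => by rw [(mem_filter.mp hc).2], sum_const,
    card_cellsOfWeightLE_filter_eq hd]

lemma sum_Icc_sum_dvd {M : Type*} [AddCommMonoid M] (n : ℕ) (f : ℕ → ℕ → M) :
    ∑ d ∈ Icc 1 n, ∑ k ∈ Icc 1 n with d ∣ k, f d k = ∑ k ∈ Icc 1 n, ∑ d ∈ k.divisors, f d k := by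
  refine sum_comm' fun d k => ?_
  simp only [mem_filter, mem_Icc, Nat.mem_divisors]
  constructor
  · rintro ⟨-, ⟨hk1, hkn⟩, hdk⟩
    exact ⟨⟨hdk, by omega⟩, hk1, hkn⟩
  · rintro ⟨⟨hdk, hk0⟩, hk1, hkn⟩
    exact ⟨⟨Nat.pos_of_dvd_of_pos hdk hk1, (Nat.le_of_dvd hk1 hdk).trans hkn⟩, ⟨hk1, hkn⟩, hdk⟩

lemma mul_card_cellMultisets (n : ℕ) :
    n * (cellMultisets n).card = ∑ k ∈ Icc 1 n, sigma2 k * (cellMultisets (n - k)).card := by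
  calc n * (cellMultisets n).card
      = ∑ T ∈ cellMultisets n, totalWeight T := by
        rw [sum_congr rfl fun T hT => mem_cellMultisets.mp hT, sum_const, smul_eq_mul, mul_comm]
    _ = ∑ c ∈ cellsOfWeightLE n, cellWeight c * ∑ T ∈ cellMultisets n, T.count c := by
        rw [sum_congr rfl fun T hT => totalWeight_eq_sum_count fun c hc => mem_cellsOfWeightLE.mpr
          ((cellWeight_le_totalWeight hc).trans_eq (mem_cellMultisets.mp hT)), sum_comm]
        simp_rw [mul_sum, mul_comm]
    _ = ∑ d ∈ Icc 1 n, d * (d * ∑ k ∈ Icc 1 n with d ∣ k, (cellMultisets (n - k)).card) := by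
        simp_rw [sum_count_cellMultisets, ← smul_eq_mul]
        exact sum_cellsOfWeightLE n fun d =>
          d • ∑ k ∈ Icc 1 n with d ∣ k, (cellMultisets (n - k)).card
    _ = ∑ k ∈ Icc 1 n, sigma2 k * (cellMultisets (n - k)).card := by
        simp_rw [mul_sum, ← mul_assoc, sum_Icc_sum_dvd, sigma2, sum_mul, sq]

noncomputable def planePartitionEquiv (n : ℕ) :
    {π : ℕ × ℕ → ℕ // IsPlanePartition n π} ≃ {T : Multiset (ℕ × ℕ) // totalWeight T = n} where
  toFun π := ⟨toCells n π, totalWeight_toCells le_rfl π.2⟩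
  invFun T := ⟨ofCells n T, by
    have := (ofCells_spec ((card_le_totalWeight T.1).trans_eq T.2)).1
    rwa [T.2] at this⟩
  left_inv π := Subtype.ext (ofCells_toCells le_rfl π.2)
  right_inv T := Subtype.ext ((ofCells_spec ((card_le_totalWeight T.1).trans_eq T.2)).2.2 n T.2.le)

lemma P2_eq_card_cellMultisets (n : ℕ) : P2 n = (cellMultisets n).card := by
  rw [P2, Nat.card_congr ((planePartitionEquiv n).trans
    (Equiv.subtypeEquivRight fun T => mem_cellMultisets.symm)), Nat.card_eq_fintype_card,
    Fintype.card_coe]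

lemma P2_zero : P2 0 = 1 := by
  rw [P2_eq_card_cellMultisets, cellMultisets_zero, card_singleton]

lemma mul_P2 (n : ℕ) : n * P2 n = ∑ k ∈ Icc 1 n, sigma2 k * P2 (n - k) := by
  simp_rw [P2_eq_card_cellMultisets, mul_card_cellMultisets]

end PlanePartition

namespace Nat.Partition
variable {n : ℕ}

lemma eq_indiscrete_of_card_parts_le_one (α : n.Partition) (h : α.parts.card ≤ 1) :
    α = indiscrete n := by
  rcases Nat.eq_zero_or_pos n with rfl | hn
  · exact Subsingleton.elim _ _
  ext1
  rw [indiscrete_parts hn.ne']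
  obtain h0 | h1 := Nat.le_one_iff_eq_zero_or_eq_one.mp h
  · have := α.parts_sum
    rw [Multiset.card_eq_zero.mp h0, Multiset.sum_zero] at this
    omega
  · obtain ⟨a, ha⟩ := Multiset.card_eq_one.mp h1
    have := α.parts_sum
    rw [ha, Multiset.sum_singleton] at this
    rw [ha, this]

lemma one_lt_card_parts_iff {α : n.Partition} {i : ℕ} (hi : i ∈ α.parts) :
    1 < α.parts.card ↔ i < n := by
  have hcons := Multiset.cons_erase hi
  have hsum : i + (α.parts.erase i).sum = n := by
    rw [← Multiset.sum_cons, hcons, α.parts_sum]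
  have hpos : ∀ j ∈ α.parts.erase i, 0 < j := fun j hj => α.parts_pos (Multiset.mem_of_mem_erase hj)
  have hne : α.parts.erase i ≠ 0 ↔ (α.parts.erase i).sum ≠ 0 := by
    constructor
    · intro h hs
      obtain ⟨j, hj⟩ := Multiset.exists_mem_of_ne_zero h
      exact (hpos j hj).ne' (Multiset.sum_eq_zero_iff.mp hs j hj)
    · intro h h0
      exact h (by rw [h0, Multiset.sum_zero])
  rw [← hcons, Multiset.card_cons, Nat.lt_add_left_iff_pos, Multiset.card_pos, hne]
  omega

lemma sum_sum_erasePart {M : Type*} [AddCommMonoid M] (F : (i : ℕ) → (n - i).Partition → M) :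
    ∑ α : n.Partition with 1 < α.parts.card, ∑ i ∈ α.parts.toFinset.attach,
        F i (α.erasePart i (Multiset.mem_toFinset.mp i.2))
      = ∑ i ∈ Ico 1 n, ∑ β : (n - i).Partition, F i β := by
  classical
  have hdite (α : n.Partition) : ∑ i ∈ α.parts.toFinset.attach,
        F i (α.erasePart i (Multiset.mem_toFinset.mp i.2))
      = ∑ i ∈ α.parts.toFinset, if h : i ∈ α.parts then F i (α.erasePart i h) else 0 := by
    rw [sum_dite_of_true fun i hi => Multiset.mem_toFinset.mp hi, univ_eq_attach]
  simp_rw [hdite]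
  rw [sum_comm' (t' := Ico 1 n) (s' := fun i => univ.filter (i ∈ ·.parts))]
  · refine sum_congr rfl fun i hi => ?_
    have ⟨hi1, hin⟩ := mem_Ico.mp hi
    rw [sum_subtype _ (p := (i ∈ ·.parts)) (by simp),
      ← (partitionWithPartEquiv hi1 hin.le).sum_comp]
    refine Fintype.sum_congr _ _ fun α => ?_
    rw [dif_pos α.2]
    congr 1
  · intro α i
    simp only [mem_filter, mem_univ, true_and, Multiset.mem_toFinset, mem_Ico]
    constructor
    · rintro ⟨hcard, hi⟩
      exact ⟨hi, α.parts_pos hi, (one_lt_card_parts_iff hi).mp hcard⟩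
    · rintro ⟨hi, -, hin⟩
      exact ⟨(one_lt_card_parts_iff hi).mpr hin, hi⟩

lemma prod_map_parts_erasePart {M : Type*} [CommMonoid M] (x : ℕ → M) (α : n.Partition) {i : ℕ}
    (hi : i ∈ α.parts) :
    (α.parts.map x).prod = x i * ((α.erasePart i hi).parts.map x).prod :=
  (Multiset.prod_map_erase (f := x) hi).symm

end Nat.Partition

open Nat.Partition

section partitionSum

variable {R : Type*} [CommRing R] (c : (k : ℕ) → k.Partition → R) (x : ℕ → R)

def partitionSum (k : ℕ) : R :=
  ∑ α : k.Partition, c k α * (α.parts.map x).prod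

variable {c}

lemma partitionSum_eq_sub {n : ℕ} (hn : n ≠ 0) (h_one : c n (indiscrete n) = n)
    (h_rec : ∀ α : n.Partition, 1 < α.parts.card →
      c n α = -∑ i ∈ α.parts.toFinset.attach,
        c (n - i.1) (α.erasePart i.1 (Multiset.mem_toFinset.mp i.2))) :
    partitionSum c x n = n * x n - ∑ i ∈ Ico 1 n, x i * partitionSum c x (n - i) := by
  have h_indiscrete : univ.filter (fun α : n.Partition => ¬ 1 < α.parts.card) = {indiscrete n} := by
    ext α
    simp only [mem_filter, mem_univ, true_and, mem_singleton, not_lt]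
    refine ⟨eq_indiscrete_of_card_parts_le_one α, ?_⟩
    rintro rfl
    simp [indiscrete_parts hn]
  rw [partitionSum, ← sum_filter_not_add_sum_filter univ (fun α => 1 < α.parts.card),
    h_indiscrete, sum_singleton, h_one, indiscrete_parts hn, Multiset.map_singleton,
    Multiset.prod_singleton, sub_eq_add_neg, ← sum_neg_distrib]
  congr 1
  calc ∑ α : n.Partition with 1 < α.parts.card, c n α * (α.parts.map x).prod
      = ∑ α : n.Partition with 1 < α.parts.card, ∑ i ∈ α.parts.toFinset.attach,
          -(x i * (c (n - i) (α.erasePart i (Multiset.mem_toFinset.mp i.2)) *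
            ((α.erasePart i (Multiset.mem_toFinset.mp i.2)).parts.map x).prod)) := by
        refine sum_congr rfl fun α hα => ?_
        rw [h_rec α (mem_filter.mp hα).2, neg_mul, sum_mul, ← sum_neg_distrib]
        refine sum_congr rfl fun i _ => ?_
        rw [prod_map_parts_erasePart x α (Multiset.mem_toFinset.mp i.2)]
        ring
    _ = ∑ i ∈ Ico 1 n, ∑ β : (n - i).Partition, -(x i * (c (n - i) β * (β.parts.map x).prod)) :=
        sum_sum_erasePart fun i β => -(x i * (c (n - i) β * (β.parts.map x).prod))
    _ = ∑ i ∈ Ico 1 n, -(x i * partitionSum c x (n - i)) := by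
        simp only [partitionSum, mul_sum, sum_neg_distrib]

end partitionSum

lemma sum_Ico_mul_sub_comm {R : Type*} [CommSemiring R] (f g : ℕ → R) (n : ℕ) :
    ∑ i ∈ Ico 1 n, f i * g (n - i) = ∑ i ∈ Ico 1 n, g i * f (n - i) := by
  refine sum_nbij' (n - ·) (n - ·) ?_ ?_ ?_ ?_ ?_ <;> intro i hi <;> simp only [mem_Ico] at hi ⊢
  · omega
  · omega
  · omega
  · omega
  · rw [mul_comm, Nat.sub_sub_self hi.2.le]

lemma eq_of_forall_eq_sub {R : Type*} [CommRing R] {a b y : ℕ → R}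
    (ha : ∀ n ≠ 0, a n = n * y n - ∑ k ∈ Ico 1 n, a k * y (n - k))
    (hb : ∀ n ≠ 0, b n = n * y n - ∑ k ∈ Ico 1 n, b k * y (n - k)) :
    ∀ n ≠ 0, a n = b n := by
  intro n
  induction n using Nat.strong_induction_on with
  | _ n ih =>
    intro hn
    rw [ha n hn, hb n hn]
    congr 1
    refine sum_congr rfl fun k hk => ?_
    rw [ih k (mem_Ico.mp hk).2 (by have := (mem_Ico.mp hk).1; omega)]

open PlanePartition in
lemma sigma2_eq_sub {n : ℕ} (hn : n ≠ 0) :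
    (sigma2 n : ℤ) = n * P2 n - ∑ k ∈ Ico 1 n, (sigma2 k : ℤ) * P2 (n - k) := by
  have := congrArg (Nat.cast : ℕ → ℤ) (mul_P2 n)
  rw [← Ico_insert_right (Nat.one_le_iff_ne_zero.mpr hn), sum_insert right_notMem_Ico, Nat.sub_self,
    P2_zero] at this
  push_cast at this
  linarith

/-- For `n ≥ 1`, `σ₂(n) = Σ_{α ⊢ n} c(α)·∏_i P₂(i)^{α_i}`, where `c` is the
integer-valued function on partitions determined by the recursion
`c((k)) = k` for one-part partitions and `c(α) = −Σ_{i : α_i ≠ 0} c(α̂ⁱ)` for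
partitions with more than one part. -/
theorem sigma2_eq_sum_partitions (n : ℕ) (hn : 1 ≤ n)
    (c : (k : ℕ) → Nat.Partition k → ℤ)
    (hc_single : ∀ (k : ℕ) (α : Nat.Partition k), α.parts.card = 1 → c k α = k)
    (hc_rec : ∀ (k : ℕ) (α : Nat.Partition k), 1 < α.parts.card →
      c k α = -∑ i ∈ α.parts.toFinset.attach,
        c (k - i.1) (α.erasePart i.1 (Multiset.mem_toFinset.mp i.2))) :
    (sigma2 n : ℤ) = ∑ α : Nat.Partition n,
      c n α * ∏ i ∈ α.parts.toFinset, (P2 i : ℤ) ^ α.parts.count i := by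
  have hrec (k : ℕ) (hk : k ≠ 0) :
      partitionSum c (fun i => (P2 i : ℤ)) k = k * P2 k -
        ∑ j ∈ Ico 1 k, partitionSum c (fun i => (P2 i : ℤ)) j * P2 (k - j) := by
    rw [partitionSum_eq_sub _ hk (hc_single k _ (by simp [indiscrete_parts hk])) (hc_rec k),
      sum_Ico_mul_sub_comm]
  rw [eq_of_forall_eq_sub (fun k hk => sigma2_eq_sub hk) hrec n (by omega), partitionSum]
  simp_rw [prod_multiset_map_count]
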